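/- For every graph G and every ray R ⊆ G, the ray R is directional in G if and only if R is topological in G; that is, the directional choices defined by the finite initial segments of R distinguish the direction induced by R from every other direction of G if and only if the sets Ω(X_n, ω) for X_n the first n vertices of R form a neighbourhood base at the end ω of R in the end space of G. -/

import Mathlib

/-! Common definitions: rays, ends (à la Halin), the end space, directions
(via Mathlib's `SimpleGraph.end`), domination, generalised paths, etc. -/

open Classical SimpleGraph

universe u

variable {V : Type u}

/-- A ray in `G`: a one-way infinite path. -/
structure Ray (G : SimpleGraph V) where
  f : ℕ → V
  inj : Function.Injective f
  adj : ∀ n, G.Adj (f n) (f (n + 1))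

namespace Ray

variable {G : SimpleGraph V}

/-- `R` has a tail inside the vertex set `S`. -/
def TailIn (R : Ray G) (S : Set V) : Prop :=
  ∃ N, ∀ n, N ≤ n → R.f n ∈ S

/-- The set of the first `n` vertices of `R`. -/
noncomputable def initSeg (R : Ray G) (n : ℕ) : Finset V :=
  (Finset.range n).image R.f

end Ray

/-- Two rays are equivalent if no finite vertex set separates them, i.e. for
every finite `X` they have tails in a common component of `G - X`. -/
def RayEquiv (G : SimpleGraph V) (R S : Ray G) : Prop :=
  ∀ X : Finset V, ∃ C : G.ComponentCompl (X : Set V), R.TailIn C ∧ S.TailIn C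

/-- The ends of `G` in the sense of Halin: equivalence classes of rays. -/
def Ends (G : SimpleGraph V) : Type u :=
  { ω : Set (Ray G) // ∃ R : Ray G, ω = { S | RayEquiv G R S } }

/-- The end of a ray. -/
def Ray.end (G : SimpleGraph V) (R : Ray G) : Ends G :=
  ⟨{ S | RayEquiv G R S }, R, rfl⟩

/-- The end `ω` lives in the component `C` of `G - X`:  every ray in `ω` has a
tail in `C`.  (For genuine ends this is the statement `C = C(X,ω)`.) -/
def LivesIn {G : SimpleGraph V} (ω : Ends G) (X : Finset V)
    (C : G.ComponentCompl (X : Set V)) : Prop :=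
  ∀ R ∈ ω.1, R.TailIn C

/-- The basic open set `Ω(X,C)` of the end space. -/
def basicSet (G : SimpleGraph V) (X : Finset V) (C : G.ComponentCompl (X : Set V)) :
    Set (Ends G) :=
  { ω | LivesIn ω X C }

/-- The end space: the topology on `Ends G` generated by the sets `Ω(X,C)`. -/
instance endsTopology (G : SimpleGraph V) : TopologicalSpace (Ends G) :=
  TopologicalSpace.generateFrom
    { U | ∃ (X : Finset V) (C : G.ComponentCompl (X : Set V)), U = basicSet G X C }

section Directions

/-- The component `f(X)` chosen by the direction `f` at the finite vertex set `X`. -/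
def dirComp {G : SimpleGraph V} (f : G.end) (X : Finset V) : G.ComponentCompl (X : Set V) :=
  f.1 (Opposite.op X)


variable (G : SimpleGraph V)

/-- The ray `R` induces the direction `f` (i.e. `f = f_ω` for the end `ω` of `R`):
for every finite `X`, the component `f(X)` contains a tail of `R`. -/
def InducesDir {G : SimpleGraph V} (R : Ray G) (f : G.end) : Prop :=
  ∀ X : Finset V, R.TailIn (dirComp f X : Set V)

/-- The end `ω` induces the direction `f`, i.e. `f = f_ω`. -/
def EndInducesDir {G : SimpleGraph V} (ω : Ends G) (f : G.end) : Prop :=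
  ∀ (X : Finset V), ∀ R ∈ ω.1, R.TailIn (dirComp f X : Set V)

/-- A direction `f` is countably determined in `G` if some countable set of
directional choices `(X, C)` distinguishes `f` from every other direction. -/
def DirCountablyDetermined {G : SimpleGraph V} (f : G.end) : Prop :=
  ∃ D : Set ((X : Finset V) × G.ComponentCompl (X : Set V)), D.Countable ∧
    ∀ h : G.end, h ≠ f → ∃ p ∈ D,
      dirComp f p.1 = p.2 ∧ dirComp h p.1 ≠ p.2

/-- `G` is countably determined: some countable set of directional choices
distinguishes every two distinct directions of `G` from each other. -/
def GraphCountablyDetermined (G : SimpleGraph V) : Prop :=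
  ∃ D : Set ((X : Finset V) × G.ComponentCompl (X : Set V)), D.Countable ∧
    ∀ f h : G.end, f ≠ h → ∃ p ∈ D,
      (dirComp f p.1 = p.2 ∧ dirComp h p.1 ≠ p.2) ∨
      (dirComp h p.1 = p.2 ∧ dirComp f p.1 ≠ p.2)

/-- `R` is directional in `G`: the directional choices given by the finite
initial segments of `R` distinguish the direction induced by `R` from every
other direction of `G`. -/
def Directional {G : SimpleGraph V} (R : Ray G) : Prop :=
  ∀ h : G.end, (∃ X : Finset V, ¬ R.TailIn (dirComp h X : Set V)) →
    ∃ n : ℕ, ¬ R.TailIn (dirComp h (R.initSeg n) : Set V)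

/-- `R` is topological in `G`: the basic open sets `Ω(X_n, ω)`, for `X_n` the
first `n` vertices of `R` and `ω` the end of `R`, form a neighbourhood base at
`ω` in the end space of `G`. -/
def Topological {G : SimpleGraph V} (R : Ray G) : Prop :=
  ∀ U : Set (Ends G), IsOpen U → R.end G ∈ U →
    ∃ (n : ℕ) (C : G.ComponentCompl (R.initSeg n : Set V)),
      LivesIn (R.end G) (R.initSeg n) C ∧ basicSet G (R.initSeg n) C ⊆ U

end Directions

section Domination

variable (G : SimpleGraph V)

/-- `v` dominates the ray `R`: no finite vertex set avoiding `v` separates `v`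
from `R` (equivalently, there is an infinite `v`–`R` fan). -/
def DominatesRay (v : V) (R : Ray G) : Prop :=
  ∀ X : Finset V, v ∉ X → ∃ (u : V) (W : G.Walk v u),
    (∃ n, R.f n = u) ∧ ∀ w ∈ W.support, w ∉ (X : Set V)

/-- `v` dominates the end `ω`. -/
def DominatesEnd (v : V) (ω : Ends G) : Prop :=
  ∀ R ∈ ω.1, DominatesRay G v R

end Domination

/-- A double ray in `G`. -/
structure DoubleRay (G : SimpleGraph V) where
  f : ℤ → V
  inj : Function.Injective f
  adj : ∀ n : ℤ, G.Adj (f n) (f (n + 1))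

namespace DoubleRay

variable {G : SimpleGraph V}

/-- The positive tail of `D` lies in the end `ω`. -/
def PosTailIn (D : DoubleRay G) (ω : Ends G) : Prop :=
  ∃ R ∈ ω.1, ∃ N : ℤ, ∀ n : ℕ, R.f n = D.f (N + n)

/-- The negative tail of `D` lies in the end `ω`. -/
def NegTailIn (D : DoubleRay G) (ω : Ends G) : Prop :=
  ∃ R ∈ ω.1, ∃ N : ℤ, ∀ n : ℕ, R.f n = D.f (N - n)

end DoubleRay

/-- `P` is (the vertex set of) a generalised path in `G` with endpoints
`ω₁ ≠ ω₂`. -/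
def IsGenPath (G : SimpleGraph V) (P : Set V) (ω₁ ω₂ : Ends G) : Prop :=
  (∃ D : DoubleRay G, P = Set.range D.f ∧
    ((D.PosTailIn ω₁ ∧ D.NegTailIn ω₂) ∨ (D.PosTailIn ω₂ ∧ D.NegTailIn ω₁))) ∨
  (∃ (u v : V) (W : G.Walk u v), W.IsPath ∧ P = { x | x ∈ W.support } ∧
    ((DominatesEnd G u ω₁ ∧ DominatesEnd G v ω₂) ∨
     (DominatesEnd G u ω₂ ∧ DominatesEnd G v ω₁))) ∨
  (∃ R : Ray G, P = Set.range R.f ∧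
    ((R ∈ ω₁.1 ∧ DominatesEnd G (R.f 0) ω₂) ∨
     (R ∈ ω₂.1 ∧ DominatesEnd G (R.f 0) ω₁)))

/-- A sun in `G` centred at `ω`: pairwise vertex-disjoint generalised paths
`(P i, {ω, leaf i})` with pairwise distinct leaves `leaf i ≠ ω`, where either
all the `P i` are double rays with one tail in `leaf i` and another in `ω`, or
all the `P i` are rays in `leaf i` whose first vertices dominate `ω`. -/
def IsSun (G : SimpleGraph V) (ω : Ends G) {I : Type*}
    (P : I → Set V) (leaf : I → Ends G) : Prop :=
  (∀ i j, i ≠ j → Disjoint (P i) (P j)) ∧ Function.Injective leaf ∧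
  (∀ i, leaf i ≠ ω) ∧
  ((∀ i, ∃ D : DoubleRay G, P i = Set.range D.f ∧
      ((D.PosTailIn (leaf i) ∧ D.NegTailIn ω) ∨
       (D.PosTailIn ω ∧ D.NegTailIn (leaf i)))) ∨
   (∀ i, ∃ R : Ray G, P i = Set.range R.f ∧ R ∈ (leaf i).1 ∧
      DominatesEnd G (R.f 0) ω))

/-! Write `X_n` for the first `n` vertices of `R` and `C_n = C(X_n, R)`. Given a finite `X`,
choose `N` so that the tail of `R` from `N` on lies in `C(X, R)` and every vertex of `X` lying in
`C_N` lies in all `C_n`. If a direction `h` agrees with `R` at `X_n` for some `n ≥ N` but not at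
`X`, then it agrees at `X_{n+1}` as well: `h(X ∪ X_{n+1})` is a proper part of the connected set
`C_n`, so it has a neighbour in `C_n` that lies in `X` or is `R n`. A vertex of `X` there lies in
`C_{n+1}`, forcing `h(X_{n+1}) = C_{n+1}`; the vertex `R n` lies in `C(X, R)`, which would force
`h(X) = C(X, R)`. So `h` agrees with `R` at every `X_n`, which directionality forbids; hence
`Ω(X_N, C_N) ⊆ Ω(X, C(X, R))`, and the `Ω(X_n, C_n)` form a neighbourhood base.

Conversely, if a direction `h` agrees with `R` at every `X_n` but not at `X`, then for every `n` a
ray inside `h(X ∪ X_n)` has its end in `Ω(X_n, C_n)` but not in the open set `Ω(X, C(X, R))`. -/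

open Filter Topology

namespace SimpleGraph.ComponentCompl

variable {G : SimpleGraph V}

theorem eq_of_mem_of_mem {K : Set V} {C D : G.ComponentCompl K} {v : V} (hC : v ∈ C)
    (hD : v ∈ D) : C = D :=
  hC.choose_spec.symm.trans hD.choose_spec

theorem exists_adj_of_subset {K L : Set V} {C : G.ComponentCompl K} {F : G.ComponentCompl L}
    (hFC : (F : Set V) ⊆ C) {u : V} (hu : u ∈ C) (huF : u ∉ F) :
    ∃ d ∈ F, ∃ c ∈ C, c ∈ L ∧ G.Adj d c := by
  obtain ⟨d₀, hd₀⟩ := F.nonempty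
  obtain ⟨_, hd₀C⟩ := hFC hd₀
  obtain ⟨_, huC⟩ := hu
  obtain ⟨p⟩ := ConnectedComponent.exact (hd₀C.trans huC.symm)
  obtain ⟨⟨⟨⟨x, _⟩, ⟨y, hyK⟩⟩, hxy⟩, -, hxF, hyF⟩ :=
    p.exists_boundary_dart {z : (Kᶜ : Set V) | (z : V) ∈ F} hd₀ huF
  have hxy : G.Adj x y := hxy
  refine ⟨x, hxF, y, mem_of_adj x y (hFC hxF) hyK hxy, ?_, hxy⟩
  by_contra hyL
  exact hyF (mem_of_adj x y hxF hyL hxy)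

end SimpleGraph.ComponentCompl

section Directions

variable {G : SimpleGraph V}

theorem dirComp_hom (h : G.end) {K L : Finset V} (hKL : K ⊆ L) :
    (dirComp h L).hom (Finset.coe_subset.mpr hKL) = dirComp h K :=
  h.2 (CategoryTheory.homOfLE hKL).op

theorem dirComp_subset (h : G.end) {K L : Finset V} (hKL : K ⊆ L) :
    (dirComp h L : Set V) ⊆ dirComp h K := by
  rw [← dirComp_hom h hKL]
  exact (dirComp h L).subset_hom _

theorem dirComp_eq_of_subset {h h' : G.end} {K L : Finset V} (hKL : K ⊆ L)
    (hL : dirComp h L = dirComp h' L) : dirComp h K = dirComp h' K := by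
  rw [← dirComp_hom h hKL, hL, dirComp_hom h' hKL]

theorem exists_adj_mem_dirComp_insert (h : G.end) {T : Finset V} {c : V}
    (hc : c ∈ dirComp h T) : ∃ d ∈ dirComp h (insert c T), G.Adj c d := by
  obtain ⟨d, hd, c', hc', hc'L, hadj⟩ := ComponentCompl.exists_adj_of_subset
    (dirComp_subset h (Finset.subset_insert c T)) hc
    fun hcF => ComponentCompl.notMem_of_mem hcF (by simp)
  obtain rfl : c' = c := by
    simpa [ComponentCompl.notMem_of_mem hc'] using hc'L
  exact ⟨d, hd, hadj.symm⟩

theorem dirComp_eq_or_dirComp_insert_eq (h : G.end) {K X : Finset V} {u : V}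
    (hu : u ∈ dirComp h K) {D : G.ComponentCompl X} (huD : u ∈ D)
    {C : G.ComponentCompl (insert u K : Finset V)} (hXC : ∀ x ∈ X, x ∈ dirComp h K → x ∈ C) :
    dirComp h X = D ∨ dirComp h (insert u K) = C := by
  have hLX : X ⊆ X ∪ insert u K := Finset.subset_union_left
  have hLu : insert u K ⊆ X ∪ insert u K := Finset.subset_union_right
  -- `h(X ∪ K ∪ {u})` misses `u`, so it has a neighbour `c ∈ h(K)` in `X ∪ {u}`.
  obtain ⟨d, hd, c, hcK, hcL, hdc⟩ := ComponentCompl.exists_adj_of_subset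
    ((dirComp_subset h hLu).trans (dirComp_subset h (Finset.subset_insert u K))) hu
    fun huF => ComponentCompl.notMem_of_mem huF (by simp)
  by_cases hcX : c ∈ X
  · have hcC := hXC c hcX hcK
    have hcE := ComponentCompl.mem_of_adj d c (dirComp_subset h hLu hd)
      (ComponentCompl.notMem_of_mem hcC) hdc
    exact Or.inr (ComponentCompl.eq_of_mem_of_mem hcE hcC)
  · obtain rfl : c = u := by
      simpa [hcX, ComponentCompl.notMem_of_mem hcK] using hcL
    have hcD := ComponentCompl.mem_of_adj d c (dirComp_subset h hLX hd) (by simpa using hcX) hdc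
    exact Or.inl (ComponentCompl.eq_of_mem_of_mem hcD huD)

theorem exists_ray_forall_mem_dirComp (h : G.end) (Y : Finset V) :
    ∃ S : Ray G, ∀ n, S.f n ∈ dirComp h Y := by
  -- Walk greedily from `c ∈ h(T)` to a neighbour in `h(T ∪ {c})`, adding `c` to `T`: the
  -- visited vertices accumulate in `T`, which the walk avoids from then on.
  let State := {p : Finset V × V // p.2 ∈ dirComp h p.1}
  choose next hnext hadj using fun p : State => exists_adj_mem_dirComp_insert h p.2
  let step : State → State := fun p => ⟨(insert p.1.2 p.1.1, next p), hnext p⟩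
  obtain ⟨a, ha⟩ := (dirComp h Y).nonempty
  let s : ℕ → State := fun n => step^[n] ⟨(Y, a), ha⟩
  have hs : ∀ n, s (n + 1) = step (s n) := fun n => Function.iterate_succ_apply' step n _
  have hmono : Monotone fun n => (s n).1.1 := monotone_nat_of_le_succ fun n => by
    rw [hs]; exact Finset.subset_insert _ _
  have hmem : ∀ i n, i < n → (s i).1.2 ∈ (s n).1.1 := fun i n hin => hmono hin <| by
    show _ ∈ (s (i + 1)).1.1
    rw [hs]; exact Finset.mem_insert_self _ _
  refine ⟨⟨fun n => (s n).1.2, Function.Injective.of_lt_imp_ne fun i n hin heq => ?_,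
    fun n => ?_⟩, fun n => dirComp_subset h (hmono (Nat.zero_le n)) (s n).2⟩
  · exact ComponentCompl.notMem_of_mem (s n).2 (heq ▸ hmem i n hin)
  · rw [hs]; exact hadj (s n)

end Directions

namespace Ray

variable {G : SimpleGraph V} (R : Ray G)

theorem tailIn_iff_eventually {S : Set V} : R.TailIn S ↔ ∀ᶠ n in atTop, R.f n ∈ S :=
  eventually_atTop.symm

theorem TailIn.mono {R : Ray G} {S T : Set V} (h : R.TailIn S) (hST : S ⊆ T) : R.TailIn T :=
  let ⟨N, hN⟩ := h
  ⟨N, fun n hn => hST (hN n hn)⟩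

theorem eventually_notMem (K : Finset V) : ∀ᶠ n in atTop, R.f n ∉ K :=
  Nat.cofinite_eq_atTop ▸
    R.inj.tendsto_cofinite.eventually K.finite_toSet.eventually_cofinite_notMem

theorem f_mem_componentComplMk {K : Set V} {N : ℕ} (hN : ∀ n ≥ N, R.f n ∉ K) {n : ℕ}
    (hn : N ≤ n) : R.f n ∈ G.componentComplMk (hN N le_rfl) := by
  induction n, hn using Nat.le_induction with
  | base => exact G.componentComplMk_mem _
  | succ n hn ih => exact ComponentCompl.mem_of_adj _ _ ih (hN (n + 1) (by omega)) (R.adj n)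

theorem exists_tailIn (K : Finset V) : ∃ C : G.ComponentCompl K, R.TailIn C :=
  let ⟨N, hN⟩ := eventually_atTop.1 (R.eventually_notMem K)
  ⟨_, N, fun _ => R.f_mem_componentComplMk hN⟩

theorem tailIn_unique {K : Set V} {C D : G.ComponentCompl K} (hC : R.TailIn C)
    (hD : R.TailIn D) : C = D :=
  let ⟨_, hnC, hnD⟩ := ((R.tailIn_iff_eventually.1 hC).and (R.tailIn_iff_eventually.1 hD)).exists
  ComponentCompl.eq_of_mem_of_mem hnC hnD

noncomputable def tailComp (K : Finset V) : G.ComponentCompl K :=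
  (R.exists_tailIn K).choose

theorem tailIn_tailComp (K : Finset V) : R.TailIn (R.tailComp K) :=
  (R.exists_tailIn K).choose_spec

theorem tailIn_iff {K : Finset V} {C : G.ComponentCompl K} : R.TailIn C ↔ R.tailComp K = C :=
  ⟨R.tailIn_unique (R.tailIn_tailComp K), fun h => h ▸ R.tailIn_tailComp K⟩

theorem tailComp_eq_of_forall_mem {K : Finset V} {C : G.ComponentCompl K}
    (h : ∀ n, R.f n ∈ C) : R.tailComp K = C :=
  R.tailIn_iff.1 ⟨0, fun n _ => h n⟩

theorem tailComp_hom {K L : Finset V} (hKL : K ⊆ L) :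
    (R.tailComp L).hom (Finset.coe_subset.mpr hKL) = R.tailComp K :=
  (R.tailIn_iff.1 ((R.tailIn_tailComp L).mono (ComponentCompl.subset_hom _ _))).symm

noncomputable def dir : G.end :=
  ⟨fun K => R.tailComp K.unop, fun f => R.tailComp_hom (CategoryTheory.leOfHom f.unop)⟩

theorem tailComp_subset {K L : Finset V} (hKL : K ⊆ L) :
    (R.tailComp L : Set V) ⊆ R.tailComp K :=
  dirComp_subset R.dir hKL

theorem f_mem_initSeg {i n : ℕ} : R.f i ∈ R.initSeg n ↔ i < n := by
  simp [initSeg, R.inj.eq_iff]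

theorem initSeg_succ (n : ℕ) : R.initSeg (n + 1) = insert (R.f n) (R.initSeg n) := by
  simp [initSeg, Finset.range_add_one, Finset.image_insert]

theorem initSeg_mono : Monotone R.initSeg :=
  fun _ _ h => Finset.image_subset_image (Finset.range_mono h)

theorem f_mem_tailComp_initSeg {m n : ℕ} (h : m ≤ n) : R.f n ∈ R.tailComp (R.initSeg m) := by
  have hm : ∀ k ≥ m, R.f k ∉ (R.initSeg m : Set V) := fun k hk => by
    simpa [R.f_mem_initSeg] using hk
  rw [R.tailIn_iff.1 ⟨m, fun _ => R.f_mem_componentComplMk hm⟩]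
  exact R.f_mem_componentComplMk hm h

theorem rayEquiv_iff {S : Ray G} : RayEquiv G R S ↔ ∀ K, R.tailComp K = S.tailComp K := by
  refine ⟨fun h K => ?_, fun h K => ⟨R.tailComp K, R.tailIn_tailComp K, h K ▸ S.tailIn_tailComp K⟩⟩
  obtain ⟨C, hRC, hSC⟩ := h K
  rw [R.tailIn_iff.1 hRC, S.tailIn_iff.1 hSC]

theorem mem_end : R ∈ (R.end G).1 :=
  R.rayEquiv_iff.2 fun _ => rfl

end Ray

section EndSpace

variable {G : SimpleGraph V}

theorem Ends.exists_mem (η : Ends G) : ∃ S, S ∈ η.1 :=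
  let ⟨R, hR⟩ := η.2
  ⟨R, hR ▸ R.mem_end⟩

theorem livesIn_iff_of_mem {η : Ends G} {S : Ray G} (hS : S ∈ η.1) {K : Finset V}
    {C : G.ComponentCompl K} : LivesIn η K C ↔ S.tailComp K = C := by
  obtain ⟨R, hR⟩ := η.2
  have hRS := R.rayEquiv_iff.1 (by rw [hR] at hS; exact hS)
  refine ⟨fun h => S.tailIn_iff.1 (h S hS), fun h T hT => T.tailIn_iff.2 ?_⟩
  rw [← h, ← hRS, R.rayEquiv_iff.1 (by rw [hR] at hT; exact hT)]

theorem mem_basicSet_iff_of_mem {η : Ends G} {S : Ray G} (hS : S ∈ η.1) {K : Finset V}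
    {C : G.ComponentCompl K} : η ∈ basicSet G K C ↔ S.tailComp K = C :=
  livesIn_iff_of_mem hS

theorem Ray.livesIn_end_iff (R : Ray G) {K : Finset V} {C : G.ComponentCompl K} :
    LivesIn (R.end G) K C ↔ R.tailComp K = C :=
  livesIn_iff_of_mem R.mem_end

end EndSpace

namespace Ray

variable {G : SimpleGraph V} (R : Ray G)

theorem eventually_forall_mem_tailComp_initSeg (X : Finset V) :
    ∀ᶠ m in atTop, ∀ x ∈ X, x ∈ R.tailComp (R.initSeg m) → ∀ k, x ∈ R.tailComp (R.initSeg k) := by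
  rw [eventually_all_finset]
  intro x _
  by_cases hx : ∀ k, x ∈ R.tailComp (R.initSeg k)
  · exact .of_forall fun _ _ => hx
  · obtain ⟨k, hk⟩ := not_forall.1 hx
    filter_upwards [eventually_ge_atTop k] with m hm hxm
    exact absurd (R.tailComp_subset (R.initSeg_mono hm) hxm) hk

theorem exists_initSeg_dirComp_eq (hR : Directional R) (X : Finset V) :
    ∃ n, ∀ h : G.end, dirComp h (R.initSeg n) = R.tailComp (R.initSeg n) →
      dirComp h X = R.tailComp X := by
  obtain ⟨N, hN⟩ := eventually_atTop.1
    ((R.tailIn_iff_eventually.1 (R.tailIn_tailComp X)).and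
      (R.eventually_forall_mem_tailComp_initSeg X))
  refine ⟨N, fun h hhN => ?_⟩
  by_contra hX
  have hlater : ∀ n ≥ N, dirComp h (R.initSeg n) = R.tailComp (R.initSeg n) := by
    intro n hn
    induction n, hn using Nat.le_induction with
    | base => exact hhN
    | succ m hm ih =>
      have hXC : ∀ x ∈ X, x ∈ dirComp h (R.initSeg m) →
          x ∈ R.tailComp (insert (R.f m) (R.initSeg m)) := fun x hxX hx => by
        rw [← R.initSeg_succ]; rw [ih] at hx
        exact (hN N le_rfl).2 x hxX (R.tailComp_subset (R.initSeg_mono hm) hx) (m + 1)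
      rw [R.initSeg_succ]
      exact (dirComp_eq_or_dirComp_insert_eq h (ih ▸ R.f_mem_tailComp_initSeg le_rfl)
        (hN m hm).1 hXC).resolve_left hX
  obtain ⟨n, hn⟩ := hR h ⟨X, fun hT => hX (R.tailIn_iff.1 hT).symm⟩
  exact hn (R.tailIn_iff.2 (dirComp_eq_of_subset (h' := R.dir) (R.initSeg_mono (le_max_left n N))
    (hlater _ (le_max_right n N))).symm)

theorem antitone_basicSet_initSeg :
    Antitone fun n => basicSet G (R.initSeg n) (R.tailComp (R.initSeg n)) := by
  intro m n hmn η hη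
  obtain ⟨S, hS⟩ := η.exists_mem
  simp only [mem_basicSet_iff_of_mem hS] at hη ⊢
  exact dirComp_eq_of_subset (h := S.dir) (h' := R.dir) (R.initSeg_mono hmn) hη

theorem topological_of_directional (hR : Directional R) : Topological R := by
  intro U hU hRU
  have hle : ⨅ n, 𝓟 (basicSet G (R.initSeg n) (R.tailComp (R.initSeg n))) ≤ 𝓝 (R.end G) := by
    rw [endsTopology, TopologicalSpace.nhds_generateFrom]
    refine le_iInf₂ fun s ⟨hRs, X, C, hs⟩ => ?_
    subst hs
    obtain rfl := R.livesIn_end_iff.1 hRs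
    obtain ⟨n, hn⟩ := R.exists_initSeg_dirComp_eq hR X
    refine iInf_le_of_le n (principal_mono.2 fun η hη => ?_)
    obtain ⟨S, hS⟩ := η.exists_mem
    rw [mem_basicSet_iff_of_mem hS] at hη ⊢
    exact hn S.dir hη
  obtain ⟨n, -, hn⟩ := (hasBasis_iInf_principal R.antitone_basicSet_initSeg.directed_ge).mem_iff.1
    (hle (hU.mem_nhds hRU))
  exact ⟨n, _, R.livesIn_end_iff.2 rfl, hn⟩

theorem directional_of_topological (hR : Topological R) : Directional R := by
  rintro h ⟨X, hX⟩
  rw [R.tailIn_iff] at hX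
  by_contra! hXn
  obtain ⟨n, C, hC, hsub⟩ := hR _ (TopologicalSpace.isOpen_generateFrom_of_mem ⟨X, _, rfl⟩)
    (R.livesIn_end_iff.2 rfl)
  rw [R.livesIn_end_iff] at hC
  obtain ⟨S, hS⟩ := exists_ray_forall_mem_dirComp h (X ∪ R.initSeg n)
  have hSK : ∀ {K}, K ⊆ X ∪ R.initSeg n → S.tailComp K = dirComp h K := fun hK =>
    S.tailComp_eq_of_forall_mem fun k => dirComp_subset h hK (hS k)
  have hSX : S.end G ∈ basicSet G X (R.tailComp X) :=
    hsub <| (mem_basicSet_iff_of_mem S.mem_end).2 <| by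
      rw [hSK Finset.subset_union_right, ← hC, R.tailIn_iff.1 (hXn n)]
  exact hX (((mem_basicSet_iff_of_mem S.mem_end).1 hSX).symm.trans (hSK Finset.subset_union_left))

end Ray

/-- A ray is directional in `G` if and only if it is topological in `G`. -/
theorem stmt_2 {V : Type u} (G : SimpleGraph V) (R : Ray G) :
    Directional R ↔ Topological R :=
  ⟨Ray.topological_of_directional R, Ray.directional_of_topological R⟩
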